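/- Let k, r, n be positive integers with r ≤ ⌈k/2⌉ and k ≤ n, and let D be a digraph of order n with a(D) > (k−1)·n. Then D has a subdigraph D' such that: (1) a(D') > (k−1)·(|(D')⁺| + |(D')⁻|)/2; (2) deg⁺_{D'}(a) + deg⁻_{D'}(b) ≥ k for every a ∈ (D')⁺ and b ∈ (D')⁻; and at least one of the following holds: (3-I) every vertex of D' has out-degree 0 or at least k/2 in D' and in-degree 0 or at least r in D', there is a vertex a of D' with deg⁺_{D'}(a) ≥ k, and |(D')⁺| ≤ |(D')⁻|; or (3-II) every vertex of D' has out-degree 0 or at least k/2 in D' and in-degree 0 or at least k/2 in D', there is a vertex b of D' with deg⁻_{D'}(b) ≥ k, and every a ∈ (D')⁺ satisfies deg⁺_D(a) > k − r. -/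

import Mathlib

/-!
Let `A ⊆ D` be minimal among subdigraphs satisfying both the density condition (1) and the
weighted condition `(k - r)|A⁺| + (r - 1)|A⁻| < a(A)`; both hold for `D` because `|D⁺|, |D⁻| ≤ n`.
Deleting all arcs leaving a vertex `x`, all arcs entering a vertex `y`, or both, loses one vertex
of `A⁺` and/or `A⁻` and only `deg⁺(x)`, `deg⁻(y)` arcs, so both conditions survive when these
degrees are small; minimality therefore yields (2) and the degree bounds of (3-I).
If `|A⁺| ≤ |A⁻|`, condition (1) forces a vertex of out-degree `≥ k` and `A` satisfies (3-I).
Otherwise every positive out-degree of `A` exceeds `k - r`, since with more out- than in-vertices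
the weighted condition implies (1). Now take `B ⊆ A` minimal subject to (1) alone: all its
positive semidegrees are `≥ k/2`, its out-vertices still have out-degree `> k - r` in `D`, and
according to which of `|B⁺|, |B⁻|` is larger it satisfies (3-I) or (3-II).
-/

open Finset

section Defs

variable {V W : Type*}

/-- Number of arcs of a digraph given by a Boolean adjacency relation. -/
def arcCount [Fintype V] (A : V → V → Bool) : ℕ :=
  ((univ : Finset (V × V)).filter (fun p => A p.1 p.2)).card

/-- Out-neighbourhood. -/
def outNbr [Fintype V] (A : V → V → Bool) (a : V) : Finset V :=
  univ.filter (fun v => A a v)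

/-- In-neighbourhood. -/
def inNbr [Fintype V] (A : V → V → Bool) (a : V) : Finset V :=
  univ.filter (fun v => A v a)

/-- Neighbourhood with a sign: `true` = out, `false` = in. -/
def nbr [Fintype V] (A : V → V → Bool) (sign : Bool) (a : V) : Finset V :=
  if sign then outNbr A a else inNbr A a

/-- Total degree (out-degree plus in-degree). -/
def totalDeg [Fintype V] (A : V → V → Bool) (a : V) : ℕ :=
  (outNbr A a).card + (inNbr A a).card

/-- Maximum total degree `Δ`. -/
def maxDeg [Fintype V] (A : V → V → Bool) : ℕ :=
  univ.sup (totalDeg A)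

/-- Second largest element `Δ₂` of the multiset of total degrees. -/
def secondMaxDeg [Fintype V] (A : V → V → Bool) : ℕ :=
  (((univ : Finset V).val.map (totalDeg A)).erase (maxDeg A)).sup

/-- Loopless digraph. -/
def Loopless (A : V → V → Bool) : Prop := ∀ v, ¬ A v v

/-- Antidirected digraph: no directed path with two arcs. -/
def Antidirected (A : V → V → Bool) : Prop := ∀ x y z, A x y → A y z → False

/-- The underlying (undirected) simple graph of a digraph. -/
def underG (A : V → V → Bool) : SimpleGraph V :=
  SimpleGraph.fromRel (fun x y => A x y)

/-- `𝒦_{2,s}`-freeness: no two distinct vertices `a`, `b` together with signs and `s`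
distinct vertices (all different from `a` and `b`) lying in both signed neighbourhoods. -/
def K2sFree [Fintype V] [DecidableEq V] (A : V → V → Bool) (s : ℕ) : Prop :=
  ¬ ∃ (a b : V) (sa sb : Bool) (S : Finset V), a ≠ b ∧ S.card = s ∧
      a ∉ S ∧ b ∉ S ∧ S ⊆ nbr A sa a ∩ nbr A sb b

/-- `T` embeds in `A`: there is an injective arc-preserving map. -/
def Embeds (T : W → W → Bool) (A : V → V → Bool) : Prop :=
  ∃ f : W → V, Function.Injective f ∧ ∀ x y, T x y → A (f x) (f y)

/-- Vertices of positive out-degree. -/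
def outVerts [Fintype V] (A : V → V → Bool) : Finset V :=
  univ.filter (fun v => (outNbr A v).card ≠ 0)

/-- Vertices of positive in-degree. -/
def inVerts [Fintype V] (A : V → V → Bool) : Finset V :=
  univ.filter (fun v => (inNbr A v).card ≠ 0)

/-- A caterpillar: a tree with a path such that every vertex is on the path
or adjacent to it. -/
def IsCaterpillarG {X : Type*} (G : SimpleGraph X) : Prop :=
  G.IsTree ∧ ∃ (x y : X) (P : G.Walk x y), P.IsPath ∧
    ∀ v, v ∈ P.support ∨ ∃ w ∈ P.support, G.Adj v w

/-- Minimum pseudo-semidegree at least `m`: at least one arc, and every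
out-degree and in-degree is `0` or at least `m`. -/
def MinPseudoSemidegGe [Fintype V] (A : V → V → Bool) (m : ℕ) : Prop :=
  0 < arcCount A ∧ (∀ v, (outNbr A v).card = 0 ∨ m ≤ (outNbr A v).card) ∧
    (∀ v, (inNbr A v).card = 0 ∨ m ≤ (inNbr A v).card)

/-- `D'` is a subdigraph of `D` with vertex set `S`. -/
def SubdigraphOn (D : V → V → Bool) (S : Finset V) (D' : V → V → Bool) : Prop :=
  ∀ x y, D' x y → D x y ∧ x ∈ S ∧ y ∈ S

/-- The vertex set of the double broom `B_{uv}(T)`: the path joining `u` and `v`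
together with all neighbours of `u` and all neighbours of `v`. -/
def broomSet [Fintype W] [DecidableEq W] (T : W → W → Bool) {u v : W}
    (p : (underG T).Walk u v) : Finset W :=
  p.support.toFinset ∪ (outNbr T u ∪ inNbr T u) ∪ (outNbr T v ∪ inNbr T v)

/-- `z` lies strictly after `x` and strictly before `y` in clockwise (cyclic) order
on `Fin n`. -/
def cycBetween {n : ℕ} (x y z : Fin n) : Prop :=
  if x < y then x < z ∧ z < y else x < z ∨ z < y

/-- An arc `pq` of the convex digraph `A` on `Fin n` is good for the antidirected
caterpillar `T` with final vertex `u`, its spine neighbour `v`, and spine with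
`plen` edges (so `plen + 1` spine vertices). -/
def GoodArc {n : ℕ} (A : Fin n → Fin n → Bool) (T : W → W → Bool)
    (u v : W) (plen : ℕ) (pq : Fin n × Fin n) : Prop :=
  ∃ f : W → Fin n, Function.Injective f ∧ (∀ x y, T x y → A (f x) (f y)) ∧
    ((T v u = true ∧ (f v, f u) = pq) ∨ (T u v = true ∧ (f u, f v) = pq)) ∧
    (∀ z : Fin n,
      (plen % 2 = 0 → cycBetween (f u) (f v) z → z ∉ Set.range f) ∧
      (plen % 2 = 1 → z ≠ f u → z ≠ f v → ¬ cycBetween (f u) (f v) z →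
        z ∉ Set.range f))

/-- Number of edges of a bipartite graph with parts `α`, `β`. -/
def bipArcCount {α β : Type*} [Fintype α] [Fintype β] (E : α → β → Bool) : ℕ :=
  ((univ : Finset (α × β)).filter (fun p => E p.1 p.2)).card

/-- Degree of a vertex of the `α` part. -/
def bipDegA {α β : Type*} [Fintype β] (E : α → β → Bool) (a : α) : ℕ :=
  (univ.filter (fun b => E a b)).card

/-- Degree of a vertex of the `β` part. -/
def bipDegB {α β : Type*} [Fintype α] (E : α → β → Bool) (b : β) : ℕ :=
  (univ.filter (fun a => E a b)).card

end Defs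

section Digraph

variable {V : Type*} {A B : V → V → Bool}

lemma le_iff_forall_imp : A ≤ B ↔ ∀ u v, A u v → B u v :=
  forall_congr' fun _ => forall_congr' fun _ => Bool.le_iff_imp

variable [Fintype V]

lemma mem_outNbr {a v : V} : v ∈ outNbr A a ↔ A a v := by simp [outNbr]

lemma mem_outVerts {v : V} : v ∈ outVerts A ↔ #(outNbr A v) ≠ 0 := by simp [outVerts]

lemma mem_inVerts {v : V} : v ∈ inVerts A ↔ #(inNbr A v) ≠ 0 := mem_outVerts (A := flip A)

lemma outVerts_flip : outVerts (flip A) = inVerts A := rfl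

lemma inVerts_flip : inVerts (flip A) = outVerts A := rfl

lemma arcCount_flip : arcCount (flip A) = arcCount A := by
  unfold arcCount
  rw [card_filter, card_filter]
  exact Fintype.sum_equiv (Equiv.prodComm V V) _ _ fun _ => rfl

lemma arcCount_eq_sum_card_outNbr : arcCount A = ∑ v, #(outNbr A v) := by
  unfold arcCount outNbr
  rw [card_filter, Fintype.sum_prod_type]
  exact sum_congr rfl fun _ _ => (card_filter _ _).symm

lemma arcCount_eq_sum_outVerts : arcCount A = ∑ v ∈ outVerts A, #(outNbr A v) := by
  rw [arcCount_eq_sum_card_outNbr]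
  exact (sum_subset (subset_univ _) fun v _ hv => by simpa [mem_outVerts] using hv).symm

lemma outNbr_mono (h : A ≤ B) (v : V) : outNbr A v ⊆ outNbr B v :=
  fun _ hw => mem_outNbr.2 (le_iff_forall_imp.1 h _ _ (mem_outNbr.1 hw))

lemma outVerts_mono (h : A ≤ B) : outVerts A ⊆ outVerts B := fun v hv =>
  mem_outVerts.2 (card_ne_zero.2 ((card_ne_zero.1 (mem_outVerts.1 hv)).mono (outNbr_mono h v)))

lemma inNbr_mono (h : A ≤ B) (v : V) : inNbr A v ⊆ inNbr B v :=
  outNbr_mono (A := flip A) (B := flip B) (fun u v => h v u) v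

lemma inVerts_mono (h : A ≤ B) : inVerts A ⊆ inVerts B :=
  outVerts_mono (A := flip A) (B := flip B) fun u v => h v u

end Digraph

section Deletion

variable {V : Type*} [DecidableEq V] {A : V → V → Bool}

def deleteOutArcs (A : V → V → Bool) (x : V) : V → V → Bool :=
  fun u v => A u v && u ≠ x

def deleteInArcs (A : V → V → Bool) (y : V) : V → V → Bool :=
  fun u v => A u v && v ≠ y

lemma deleteInArcs_eq_flip (y : V) : deleteInArcs A y = flip (deleteOutArcs (flip A) y) := rfl

lemma deleteOutArcs_le (x : V) : deleteOutArcs A x ≤ A := fun _ _ => Bool.and_le_left _ _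

lemma deleteInArcs_le (y : V) : deleteInArcs A y ≤ A :=
  fun u v => deleteOutArcs_le (A := flip A) y v u

variable [Fintype V]

lemma outNbr_deleteOutArcs (x v : V) :
    outNbr (deleteOutArcs A x) v = if v = x then ∅ else outNbr A v := by
  by_cases hv : v = x <;> ext w <;> simp [outNbr, deleteOutArcs, hv]

lemma inNbr_deleteInArcs (y v : V) :
    inNbr (deleteInArcs A y) v = if v = y then ∅ else inNbr A v :=
  outNbr_deleteOutArcs (A := flip A) y v

lemma outVerts_deleteOutArcs (x : V) : outVerts (deleteOutArcs A x) = (outVerts A).erase x := by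
  ext v
  by_cases hv : v = x <;> simp [mem_outVerts, outNbr_deleteOutArcs, hv]

lemma inVerts_deleteInArcs (y : V) : inVerts (deleteInArcs A y) = (inVerts A).erase y :=
  outVerts_deleteOutArcs (A := flip A) y

lemma arcCount_deleteOutArcs (x : V) :
    arcCount (deleteOutArcs A x) + #(outNbr A x) = arcCount A := by
  rw [arcCount_eq_sum_card_outNbr, arcCount_eq_sum_card_outNbr (A := A)]
  calc ∑ v, #(outNbr (deleteOutArcs A x) v) + #(outNbr A x)
      = ∑ v, (#(outNbr (deleteOutArcs A x) v) + if v = x then #(outNbr A x) else 0) := by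
        rw [sum_add_distrib, sum_ite_eq' univ x, if_pos (mem_univ x)]
    _ = ∑ v, #(outNbr A v) := sum_congr rfl fun v _ => by
        by_cases hv : v = x <;> simp [outNbr_deleteOutArcs, hv]

lemma arcCount_deleteInArcs (y : V) :
    arcCount (deleteInArcs A y) + #(inNbr A y) = arcCount A := by
  rw [deleteInArcs_eq_flip, arcCount_flip, ← arcCount_flip (A := A)]
  exact arcCount_deleteOutArcs y

lemma deleteOutArcs_lt {x : V} (hx : x ∈ outVerts A) : deleteOutArcs A x < A :=
  (deleteOutArcs_le x).lt_of_ne fun h => mem_outVerts.1 hx <| by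
    rw [← congrArg (fun B => #(outNbr B x)) h, outNbr_deleteOutArcs, if_pos rfl, card_empty]

lemma deleteInArcs_lt {y : V} (hy : y ∈ inVerts A) : deleteInArcs A y < A :=
  (deleteInArcs_le y).lt_of_ne fun h => mem_inVerts.1 hy <| by
    rw [← congrArg (fun B => #(inNbr B y)) h, inNbr_deleteInArcs, if_pos rfl, card_empty]

lemma deleteInArcs_deleteOutArcs_lt {x : V} (hx : x ∈ outVerts A) (y : V) :
    deleteInArcs (deleteOutArcs A x) y < A :=
  (deleteInArcs_le y).trans_lt (deleteOutArcs_lt hx)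

end Deletion

def ArcDense {V : Type*} [Fintype V] (p q m : ℕ) (A : V → V → Bool) : Prop :=
  p * #(outVerts A) + q * #(inVerts A) < m * arcCount A

namespace ArcDense

variable {V : Type*} [Fintype V] {p q m : ℕ} {A B : V → V → Bool}

lemma flip_iff : ArcDense q p m (flip A) ↔ ArcDense p q m A := by
  rw [ArcDense, ArcDense, outVerts_flip, inVerts_flip, arcCount_flip, add_comm]

lemma of_mul_card_lt (h : (p + q) * Fintype.card V < m * arcCount A) : ArcDense p q m A := by
  have := card_le_univ (outVerts A)
  have := card_le_univ (inVerts A)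
  unfold ArcDense
  nlinarith

lemma of_deletion {i j d : ℕ} (h : ArcDense p q m A)
    (hout : #(outVerts B) + i ≤ #(outVerts A)) (hin : #(inVerts B) + j ≤ #(inVerts A))
    (harc : arcCount A ≤ arcCount B + d) (hd : m * d ≤ p * i + q * j) : ArcDense p q m B := by
  unfold ArcDense at *
  nlinarith

lemma mul_card_add_lt (h : ArcDense p p m A) :
    p * (#(outVerts A) + #(inVerts A)) < m * arcCount A :=
  (mul_add p _ _).trans_lt h

lemma balance (h : ArcDense p q 1 A) (hqp : q ≤ p) (hs : #(inVerts A) ≤ #(outVerts A)) :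
    ArcDense (p + q) (p + q) 2 A := by
  unfold ArcDense at *
  nlinarith [mul_add_mul_le_mul_add_mul hqp hs]

variable [DecidableEq V] {x y : V}

lemma deleteOutArcs_of_mul_le (h : ArcDense p q m A) (hx : x ∈ outVerts A)
    (hd : m * #(outNbr A x) ≤ p) :
    ArcDense p q m (deleteOutArcs A x) :=
  h.of_deletion (i := 1) (j := 0) (by rw [outVerts_deleteOutArcs, card_erase_add_one hx])
    (by simpa using card_le_card (inVerts_mono (deleteOutArcs_le x)))
    (arcCount_deleteOutArcs x).ge (by simpa using hd)

lemma deleteInArcs_of_mul_le (h : ArcDense p q m A) (hy : y ∈ inVerts A)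
    (hd : m * #(inNbr A y) ≤ q) :
    ArcDense p q m (deleteInArcs A y) :=
  flip_iff.2 ((flip_iff.2 h).deleteOutArcs_of_mul_le hy hd)

lemma deleteInArcs_deleteOutArcs_of_mul_le (h : ArcDense p q m A) (hx : x ∈ outVerts A)
    (hy : y ∈ inVerts A) (hd : m * (#(outNbr A x) + #(inNbr A y)) ≤ p + q) :
    ArcDense p q m (deleteInArcs (deleteOutArcs A x) y) := by
  have hout : outVerts (deleteInArcs (deleteOutArcs A x) y) ⊂ outVerts A := by
    refine (outVerts_mono (deleteInArcs_le y)).trans_ssubset ?_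
    rw [outVerts_deleteOutArcs]
    exact erase_ssubset hx
  have hin : inVerts (deleteInArcs (deleteOutArcs A x) y) ⊂ inVerts A := by
    rw [inVerts_deleteInArcs]
    exact (erase_subset_erase y (inVerts_mono (deleteOutArcs_le x))).trans_ssubset
      (erase_ssubset hy)
  have harc : #(inNbr (deleteOutArcs A x) y) ≤ #(inNbr A y) :=
    card_le_card (inNbr_mono (deleteOutArcs_le x) y)
  refine h.of_deletion (i := 1) (j := 1) (d := #(outNbr A x) + #(inNbr A y))
    (card_lt_card hout) (card_lt_card hin) ?_ (by simpa using hd)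
  have := arcCount_deleteOutArcs (A := A) x
  have := arcCount_deleteInArcs (A := deleteOutArcs A x) y
  omega

end ArcDense

section Pigeonhole

variable {V : Type*} [Fintype V] {p : ℕ} {A : V → V → Bool}

lemma exists_lt_card_outNbr (h : p * #(outVerts A) < arcCount A) : ∃ v, p < #(outNbr A v) := by
  rw [arcCount_eq_sum_outVerts, mul_comm, ← smul_eq_mul, ← sum_const] at h
  obtain ⟨v, -, hv⟩ := exists_lt_of_sum_lt h
  exact ⟨v, hv⟩

lemma ArcDense.exists_lt_card_outNbr (h : ArcDense p p 2 A)
    (hs : #(outVerts A) ≤ #(inVerts A)) : ∃ v, p < #(outNbr A v) := by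
  unfold ArcDense at h
  exact _root_.exists_lt_card_outNbr (by nlinarith)

lemma ArcDense.exists_lt_card_inNbr (h : ArcDense p p 2 A)
    (hs : #(inVerts A) ≤ #(outVerts A)) : ∃ v, p < #(inNbr A v) :=
  (ArcDense.flip_iff.2 h).exists_lt_card_outNbr hs

end Pigeonhole

section Minimal

variable {V : Type*} [Fintype V] [DecidableEq V] {p q m : ℕ} {A : V → V → Bool}

lemma Minimal.card_outNbr_eq_zero_or_lt (hA : Minimal (ArcDense p q m) A) (v : V) :
    #(outNbr A v) = 0 ∨ p < m * #(outNbr A v) := by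
  by_contra! h
  have hv := mem_outVerts.2 h.1
  exact hA.not_prop_of_lt (deleteOutArcs_lt hv) (hA.prop.deleteOutArcs_of_mul_le hv h.2)

lemma Minimal.card_inNbr_eq_zero_or_lt (hA : Minimal (ArcDense p q m) A) (v : V) :
    #(inNbr A v) = 0 ∨ q < m * #(inNbr A v) := by
  by_contra! h
  have hv := mem_inVerts.2 h.1
  exact hA.not_prop_of_lt (deleteInArcs_lt hv) (hA.prop.deleteInArcs_of_mul_le hv h.2)

lemma Minimal.lt_mul_card_outNbr_add_card_inNbr (hA : Minimal (ArcDense p q m) A) {a b : V}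
    (ha : a ∈ outVerts A) (hb : b ∈ inVerts A) :
    p + q < m * (#(outNbr A a) + #(inNbr A b)) := by
  by_contra! h
  exact hA.not_prop_of_lt (deleteInArcs_deleteOutArcs_lt ha b)
    (hA.prop.deleteInArcs_deleteOutArcs_of_mul_le ha hb h)

end Minimal

theorem exists_le_outDeg_half_inDeg_ge {V : Type*} [Fintype V] [DecidableEq V] {k r : ℕ}
    {D : V → V → Bool} (hr : 0 < r) (hrk : 2 * r ≤ k + 1)
    (hP : ArcDense (k - 1) (k - 1) 2 D) (hI : ArcDense (k - r) (r - 1) 1 D) :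
    ∃ A ≤ D, ArcDense (k - 1) (k - 1) 2 A ∧
      (∀ a ∈ outVerts A, ∀ b ∈ inVerts A, k ≤ #(outNbr A a) + #(inNbr A b)) ∧
      (∀ v, #(outNbr A v) = 0 ∨ k ≤ 2 * #(outNbr A v)) ∧
      (∀ v, #(inNbr A v) = 0 ∨ r ≤ #(inNbr A v)) ∧
      (#(inVerts A) < #(outVerts A) → ∀ v ∈ outVerts A, k - r < #(outNbr A v)) := by
  obtain ⟨A, hAD, hA⟩ := exists_minimal_le_of_wellFoundedLT
    (fun B => ArcDense (k - 1) (k - 1) 2 B ∧ ArcDense (k - r) (r - 1) 1 B) D ⟨hP, hI⟩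
  obtain ⟨hPA, hIA⟩ := hA.prop
  refine ⟨A, hAD, hPA, fun a ha b hb => ?_, fun v => ?_, fun v => ?_, fun hs v hv => ?_⟩
  · by_contra! h
    exact hA.not_prop_of_lt (deleteInArcs_deleteOutArcs_lt ha b)
      ⟨hPA.deleteInArcs_deleteOutArcs_of_mul_le ha hb (by omega),
        hIA.deleteInArcs_deleteOutArcs_of_mul_le ha hb (by omega)⟩
  · by_contra! h
    have hv := mem_outVerts.2 h.1
    exact hA.not_prop_of_lt (deleteOutArcs_lt hv)
      ⟨hPA.deleteOutArcs_of_mul_le hv (by omega), hIA.deleteOutArcs_of_mul_le hv (by omega)⟩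
  · by_contra! h
    have hv := mem_inVerts.2 h.1
    exact hA.not_prop_of_lt (deleteInArcs_lt hv)
      ⟨hPA.deleteInArcs_of_mul_le hv (by omega), hIA.deleteInArcs_of_mul_le hv (by omega)⟩
  · by_contra! h
    -- with more out- than in-vertices, the second density condition implies the first
    have hIB := hIA.deleteOutArcs_of_mul_le hv (by omega)
    have hbal : #(inVerts (deleteOutArcs A v)) ≤ #(outVerts (deleteOutArcs A v)) := by
      rw [outVerts_deleteOutArcs, card_erase_of_mem hv]
      have := card_le_card (inVerts_mono (deleteOutArcs_le (A := A) v))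
      omega
    have hPB := hIB.balance (by omega) hbal
    rw [show k - r + (r - 1) = k - 1 by omega] at hPB
    exact hA.not_prop_of_lt (deleteOutArcs_lt hv) ⟨hPB, hIB⟩

theorem stmt_11_general (k r n : ℕ) (hr : 0 < r)
    (hrk : r ≤ (k + 1) / 2)
    {V : Type*} [Fintype V] [DecidableEq V]
    (D : V → V → Bool) (hcard : Fintype.card V = n)
    (harcs : (k - 1) * n < arcCount D) :
    ∃ D' : V → V → Bool, (∀ x y, D' x y → D x y) ∧
      (k - 1) * ((outVerts D').card + (inVerts D').card) < 2 * arcCount D' ∧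
      (∀ a ∈ outVerts D', ∀ b ∈ inVerts D',
        k ≤ (outNbr D' a).card + (inNbr D' b).card) ∧
      (((∀ v, (outNbr D' v).card = 0 ∨ k ≤ 2 * (outNbr D' v).card) ∧
          (∀ v, (inNbr D' v).card = 0 ∨ r ≤ (inNbr D' v).card) ∧
          (∃ a, k ≤ (outNbr D' a).card) ∧
          (outVerts D').card ≤ (inVerts D').card) ∨
        ((∀ v, (outNbr D' v).card = 0 ∨ k ≤ 2 * (outNbr D' v).card) ∧
          (∀ v, (inNbr D' v).card = 0 ∨ k ≤ 2 * (inNbr D' v).card) ∧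
          (∃ b, k ≤ (inNbr D' b).card) ∧
          (∀ a ∈ outVerts D', k - r < (outNbr D a).card))) := by
  subst hcard
  have hkr : k - r + (r - 1) = k - 1 := by omega
  have hP : ArcDense (k - 1) (k - 1) 2 D := .of_mul_card_lt (by rw [← two_mul, mul_assoc]; omega)
  have hI : ArcDense (k - r) (r - 1) 1 D := .of_mul_card_lt (by rw [hkr]; omega)
  obtain ⟨A, hAD, hPA, hpairA, houtA, hinA, hheavyA⟩ :=
    exists_le_outDeg_half_inDeg_ge hr (by omega) hP hI
  by_cases hsA : #(outVerts A) ≤ #(inVerts A)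
  · obtain ⟨a, ha⟩ := hPA.exists_lt_card_outNbr hsA
    exact ⟨A, le_iff_forall_imp.1 hAD, hPA.mul_card_add_lt, hpairA,
      .inl ⟨houtA, hinA, ⟨a, by omega⟩, hsA⟩⟩
  obtain ⟨B, hBA, hB⟩ := exists_minimal_le_of_wellFoundedLT _ A hPA
  have houtB (v : V) : #(outNbr B v) = 0 ∨ k ≤ 2 * #(outNbr B v) :=
    (hB.card_outNbr_eq_zero_or_lt v).imp_right fun h => by omega
  have hinB (v : V) : #(inNbr B v) = 0 ∨ k ≤ 2 * #(inNbr B v) :=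
    (hB.card_inNbr_eq_zero_or_lt v).imp_right fun h => by omega
  have hpairB (a : V) (ha : a ∈ outVerts B) (b : V) (hb : b ∈ inVerts B) :
      k ≤ #(outNbr B a) + #(inNbr B b) := by
    have := hB.lt_mul_card_outNbr_add_card_inNbr ha hb
    omega
  have hheavyB (a : V) (ha : a ∈ outVerts B) : k - r < #(outNbr D a) :=
    (hheavyA (by omega) a (outVerts_mono hBA ha)).trans_le (card_le_card (outNbr_mono hAD a))
  refine ⟨B, le_iff_forall_imp.1 (hBA.trans hAD), hB.prop.mul_card_add_lt, hpairB, ?_⟩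
  by_cases hsB : #(outVerts B) ≤ #(inVerts B)
  · obtain ⟨a, ha⟩ := hB.prop.exists_lt_card_outNbr hsB
    exact .inl ⟨houtB, fun v => (hinB v).imp_right fun h => by omega, ⟨a, by omega⟩, hsB⟩
  · obtain ⟨b, hb⟩ := hB.prop.exists_lt_card_inNbr (by omega)
    exact .inr ⟨houtB, hinB, ⟨b, by omega⟩, hheavyB⟩

/-- The subdigraph selection lemma (Lemma `cor:subdigraph` of the paper). -/
theorem stmt_11 (k r n : ℕ) (hk : 0 < k) (hr : 0 < r) (hn : 0 < n)
    (hrk : r ≤ (k + 1) / 2) (hkn : k ≤ n)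
    {V : Type*} [Fintype V] [DecidableEq V]
    (D : V → V → Bool) (hloop : Loopless D) (hcard : Fintype.card V = n)
    (harcs : (k - 1) * n < arcCount D) :
    ∃ D' : V → V → Bool, (∀ x y, D' x y → D x y) ∧
      (k - 1) * ((outVerts D').card + (inVerts D').card) < 2 * arcCount D' ∧
      (∀ a ∈ outVerts D', ∀ b ∈ inVerts D',
        k ≤ (outNbr D' a).card + (inNbr D' b).card) ∧
      (((∀ v, (outNbr D' v).card = 0 ∨ k ≤ 2 * (outNbr D' v).card) ∧
          (∀ v, (inNbr D' v).card = 0 ∨ r ≤ (inNbr D' v).card) ∧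
          (∃ a, k ≤ (outNbr D' a).card) ∧
          (outVerts D').card ≤ (inVerts D').card) ∨
        ((∀ v, (outNbr D' v).card = 0 ∨ k ≤ 2 * (outNbr D' v).card) ∧
          (∀ v, (inNbr D' v).card = 0 ∨ k ≤ 2 * (inNbr D' v).card) ∧
          (∃ b, k ≤ (inNbr D' b).card) ∧
          (∀ a ∈ outVerts D', k - r < (outNbr D a).card))) :=
  stmt_11_general k r n hr hrk D hcard harcs
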